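/- Let x, y : (−∞, σ₀] → ℝ be differentiable solutions of x' = 2x² − x − y + e₁(σ), y' = 2xy − 2y + e₂(σ) with e₁(σ), e₂(σ) → 0 as σ → −∞, satisfying 1/2 − o(1) ≤ x ≤ 1 + o(1) and −o(1) ≤ y ≤ 1 + o(1). Then as σ → −∞ either (x, y) → (1/2, 0) or (x, y) → (1, 1). -/
import Mathlib

open Filter Set

/-- Mean value: derivative lower bound on the open interval gives linear growth. -/
lemma mvt_ge {f f' : ℝ → ℝ} {a b m : ℝ} (hab : a ≤ b)
    (hd : ∀ σ ∈ Set.Icc a b, HasDerivAt f (f' σ) σ)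
    (hm : ∀ σ ∈ Set.Ioo a b, m ≤ f' σ) : m * (b - a) ≤ f b - f a := by
  have hc : ContinuousOn f (Set.Icc a b) := fun σ hσ =>
    (hd σ hσ).continuousAt.continuousWithinAt
  have hdiff : DifferentiableOn ℝ f (interior (Set.Icc a b)) := by
    rw [interior_Icc]
    exact fun σ hσ =>
      ((hd σ (Set.Ioo_subset_Icc_self hσ)).differentiableAt).differentiableWithinAt
  have hge : ∀ σ ∈ interior (Set.Icc a b), m ≤ deriv f σ := by
    rw [interior_Icc]
    intro σ hσ
    rw [(hd σ (Set.Ioo_subset_Icc_self hσ)).deriv]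
    exact hm σ hσ
  exact (convex_Icc a b).mul_sub_le_image_sub_of_le_deriv hc hdiff hge a
    (Set.left_mem_Icc.2 hab) b (Set.right_mem_Icc.2 hab) hab

/-- Mean value: derivative upper bound on the open interval gives linear growth bound. -/
lemma mvt_le {f f' : ℝ → ℝ} {a b M : ℝ} (hab : a ≤ b)
    (hd : ∀ σ ∈ Set.Icc a b, HasDerivAt f (f' σ) σ)
    (hm : ∀ σ ∈ Set.Ioo a b, f' σ ≤ M) : f b - f a ≤ M * (b - a) := by
  have hc : ContinuousOn f (Set.Icc a b) := fun σ hσ =>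
    (hd σ hσ).continuousAt.continuousWithinAt
  have hdiff : DifferentiableOn ℝ f (interior (Set.Icc a b)) := by
    rw [interior_Icc]
    exact fun σ hσ =>
      ((hd σ (Set.Ioo_subset_Icc_self hσ)).differentiableAt).differentiableWithinAt
  have hge : ∀ σ ∈ interior (Set.Icc a b), deriv f σ ≤ M := by
    rw [interior_Icc]
    intro σ hσ
    rw [(hd σ (Set.Ioo_subset_Icc_self hσ)).deriv]
    exact hm σ hσ
  exact (convex_Icc a b).image_sub_le_mul_sub_of_deriv_le hc hdiff hge a
    (Set.left_mem_Icc.2 hab) b (Set.right_mem_Icc.2 hab) hab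

/-- Barrier lemma (upper): if `f a ≤ c` and the derivative is nonpositive whenever
`f` is in the band `[c, c+γ]`, then `f b ≤ c`. -/
lemma barrier_le {f f' : ℝ → ℝ} {a b c γ : ℝ} (hab : a ≤ b) (hγ : 0 < γ)
    (hd : ∀ σ ∈ Set.Icc a b, HasDerivAt f (f' σ) σ)
    (h0 : f a ≤ c)
    (hband : ∀ σ ∈ Set.Icc a b, c ≤ f σ → f σ ≤ c + γ → f' σ ≤ 0) :
    f b ≤ c := by
  by_contra hb
  push_neg at hb
  have hc : ContinuousOn f (Set.Icc a b) := fun σ hσ =>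
    (hd σ hσ).continuousAt.continuousWithinAt
  set S : Set ℝ := Set.Icc a b ∩ f ⁻¹' Set.Iic c with hS
  have hSne : S.Nonempty := ⟨a, ⟨Set.left_mem_Icc.2 hab, h0⟩⟩
  have hSc : IsClosed S := hc.preimage_isClosed_of_isClosed isClosed_Icc isClosed_Iic
  have hSbdd : BddAbove S := ⟨b, fun σ hσ => hσ.1.2⟩
  set s := sSup S with hs
  have hsS : s ∈ S := hSc.csSup_mem hSne hSbdd
  have hsab : s ∈ Set.Icc a b := hsS.1
  have hfs : f s ≤ c := hsS.2
  have hgt : ∀ σ, s < σ → σ ≤ b → c < f σ := by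
    intro σ h1 h2
    by_contra hcon
    push_neg at hcon
    have hmem : σ ∈ S := ⟨⟨hsab.1.trans h1.le, h2⟩, hcon⟩
    exact absurd (le_csSup hSbdd hmem) (not_le.2 h1)
  have hsb : s < b := by
    rcases lt_or_eq_of_le hsab.2 with h | h
    · exact h
    · exfalso; rw [h] at hfs; exact absurd hfs (not_le.2 hb)
  by_cases hT : ∃ σ ∈ Set.Icc s b, c + γ ≤ f σ
  · obtain ⟨σ₁, hσ₁, hfσ₁⟩ := hT
    set T : Set ℝ := Set.Icc s b ∩ f ⁻¹' Set.Ici (c + γ) with hTdef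
    have hTc : IsClosed T :=
      (hc.mono (Set.Icc_subset_Icc hsab.1 le_rfl)).preimage_isClosed_of_isClosed
        isClosed_Icc isClosed_Ici
    have hTne : T.Nonempty := ⟨σ₁, hσ₁, hfσ₁⟩
    have hTbdd : BddBelow T := ⟨s, fun σ hσ => hσ.1.1⟩
    set t := sInf T with ht
    have htT : t ∈ T := hTc.csInf_mem hTne hTbdd
    have hts : s ≤ t := htT.1.1
    have hft : c + γ ≤ f t := htT.2
    have hst : s < t := by
      rcases lt_or_eq_of_le hts with h | h
      · exact h
      · exfalso; rw [← h] at hft; linarith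
    have hlt : ∀ σ, s ≤ σ → σ < t → f σ < c + γ := by
      intro σ h1 h2
      by_contra hcon
      push_neg at hcon
      exact absurd (csInf_le hTbdd ⟨⟨h1, h2.le.trans htT.1.2⟩, hcon⟩) (not_le.2 h2)
    have hsub : Set.Icc s t ⊆ Set.Icc a b :=
      Set.Icc_subset_Icc hsab.1 (htT.1.2)
    have := mvt_le (M := 0) hst.le (fun σ hσ => hd σ (hsub hσ))
      (fun σ hσ => hband σ (hsub (Set.Ioo_subset_Icc_self hσ))
        (hgt σ hσ.1 ((Set.Ioo_subset_Icc_self hσ).2.trans htT.1.2)).le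
        (hlt σ hσ.1.le hσ.2).le)
    linarith
  · push_neg at hT
    have hsub : Set.Icc s b ⊆ Set.Icc a b := Set.Icc_subset_Icc hsab.1 le_rfl
    have := mvt_le (M := 0) hsb.le (fun σ hσ => hd σ (hsub hσ))
      (fun σ hσ => hband σ (hsub (Set.Ioo_subset_Icc_self hσ))
        (hgt σ hσ.1 hσ.2.le).le
        (hT σ (Set.Ioo_subset_Icc_self hσ)).le)
    linarith

/-- Barrier lemma (lower): if `c ≤ f a` and the derivative is nonnegative whenever
`f` is in the band `[c-γ, c]`, then `c ≤ f b`. -/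
lemma barrier_ge {f f' : ℝ → ℝ} {a b c γ : ℝ} (hab : a ≤ b) (hγ : 0 < γ)
    (hd : ∀ σ ∈ Set.Icc a b, HasDerivAt f (f' σ) σ)
    (h0 : c ≤ f a)
    (hband : ∀ σ ∈ Set.Icc a b, c - γ ≤ f σ → f σ ≤ c → 0 ≤ f' σ) :
    c ≤ f b := by
  have := barrier_le (f := fun σ => -f σ) (f' := fun σ => -f' σ) (c := -c) (γ := γ) hab hγ
    (fun σ hσ => (hd σ hσ).neg)
    (by simpa using h0)
    (fun σ hσ h1 h2 => by
      have h1' : -c ≤ -f σ := h1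
      have h2' : -f σ ≤ -c + γ := h2
      have := hband σ hσ (by linarith) (by linarith)
      simpa using this)
  simpa using this

/-- Decay lemma: if the derivative is `≤ -m` whenever `f ≥ c`, `f a ≤ M`, and the
interval is long enough, then `f b ≤ c`. -/
lemma decay_le {f f' : ℝ → ℝ} {a b c M m : ℝ} (hab : a ≤ b) (hm : 0 < m)
    (hd : ∀ σ ∈ Set.Icc a b, HasDerivAt f (f' σ) σ)
    (hM : f a ≤ M) (hL : M - c ≤ m * (b - a))
    (hdec : ∀ σ ∈ Set.Icc a b, c ≤ f σ → f' σ ≤ -m) :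
    f b ≤ c := by
  by_cases hall : ∀ σ ∈ Set.Icc a b, c ≤ f σ
  · have := mvt_le (M := -m) hab hd
      (fun σ hσ => hdec σ (Set.Ioo_subset_Icc_self hσ) (hall σ (Set.Ioo_subset_Icc_self hσ)))
    nlinarith
  · push_neg at hall
    obtain ⟨σ₁, hσ₁, hfσ₁⟩ := hall
    have hsub : Set.Icc σ₁ b ⊆ Set.Icc a b := Set.Icc_subset_Icc hσ₁.1 le_rfl
    exact barrier_le (γ := 1) hσ₁.2 one_pos (fun σ hσ => hd σ (hsub hσ)) hfσ₁.le
      (fun σ hσ h1 _ => (hdec σ (hsub hσ) h1).trans (by linarith))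

/-- If `y ≤ 1 - 2δ` at a (sufficiently negative) time, then `x ≤ 1 - δ/24` there:
otherwise `x` would escape above `1 + δ/24` within unit time. -/
lemma lemB (x y e₁ e₂ : ℝ → ℝ) (δ T : ℝ) (hδ : 0 < δ) (hδ6 : δ ≤ 1/6)
    (hx : ∀ σ ≤ T, HasDerivAt x (2 * x σ ^ 2 - x σ - y σ + e₁ σ) σ)
    (hy : ∀ σ ≤ T, HasDerivAt y (2 * x σ * y σ - 2 * y σ + e₂ σ) σ)
    (hreg : ∀ σ ≤ T, 1/2 - δ/24 ≤ x σ ∧ x σ ≤ 1 + δ/24 ∧ -(δ/24) ≤ y σ ∧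
      y σ ≤ 1 + δ/24 ∧ |e₁ σ| ≤ δ/24 ∧ |e₂ σ| ≤ δ/24) :
    ∀ s ≤ T - 1, y s ≤ 1 - 2*δ → x s ≤ 1 - δ/24 := by
  intro s hs hys
  by_contra hxs
  push_neg at hxs
  have hsub : ∀ σ ∈ Set.Icc s (s+1), σ ≤ T := fun σ hσ => by
    have := hσ.2; linarith
  -- Step (i): y stays ≤ 1 - δ on [s, s+1]
  have hyd : ∀ τ, τ ≤ T → 2 * x τ * y τ - 2 * y τ + e₂ τ ≤ δ/4 := by
    intro τ hτ
    obtain ⟨h1, h2, h3, h4, h5, h6⟩ := hreg τ hτ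
    have h6' : e₂ τ ≤ δ/24 := (abs_le.mp h6).2
    nlinarith [mul_nonneg (by linarith : (0:ℝ) ≤ y τ + δ/24)
      (by linarith : (0:ℝ) ≤ 1 + δ/24 - x τ)]
  have hyband : ∀ σ ∈ Set.Icc s (s+1), y σ ≤ 1 - δ := by
    intro σ hσ
    have hmv := mvt_le (f := y) (f' := fun τ => 2 * x τ * y τ - 2 * y τ + e₂ τ)
      (M := δ/4) hσ.1
      (fun τ hτ => hy τ (hsub τ ⟨hτ.1, hτ.2.trans hσ.2⟩))
      (fun τ hτ => hyd τ (hsub τ ⟨hτ.1.le, hτ.2.le.trans hσ.2⟩))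
    have := hσ.2
    nlinarith [hmv]
  -- Step (ii): derivative of x is at least δ/4 whenever x ≥ 1 - 2*(δ/24) on [s,s+1]
  have hxd : ∀ τ ∈ Set.Icc s (s+1), 1 - 2*(δ/24) ≤ x τ →
      δ/4 ≤ 2 * x τ ^ 2 - x τ - y τ + e₁ τ := by
    intro τ hτ hxτ
    obtain ⟨h1, h2, h3, h4, h5, h6⟩ := hreg τ (hsub τ hτ)
    have h5' : -(δ/24) ≤ e₁ τ := (abs_le.mp h5).1
    have hyτ := hyband τ hτ
    nlinarith [mul_nonneg (by linarith : (0:ℝ) ≤ x τ - (1 - 2*(δ/24)))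
      (by linarith : (0:ℝ) ≤ 2 * x τ + 1 - 4*(δ/24))]
  -- Step (iii): x stays ≥ 1 - δ/24 on [s, s+1]
  have hxlow : ∀ σ ∈ Set.Icc s (s+1), 1 - δ/24 ≤ x σ := by
    intro σ hσ
    refine barrier_ge (f := x) (f' := fun τ => 2 * x τ ^ 2 - x τ - y τ + e₁ τ)
      (γ := δ/24) hσ.1 (by positivity)
      (fun τ hτ => hx τ (hsub τ ⟨hτ.1, hτ.2.trans hσ.2⟩)) hxs.le ?_
    intro τ hτ hb1 _
    have := hxd τ ⟨hτ.1, hτ.2.trans hσ.2⟩ (by linarith)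
    show (0:ℝ) ≤ 2 * x τ ^ 2 - x τ - y τ + e₁ τ
    linarith
  -- Step (iv): x grows by δ/4 over [s, s+1], contradiction
  have hmv := mvt_ge (f := x) (f' := fun τ => 2 * x τ ^ 2 - x τ - y τ + e₁ τ)
    (m := δ/4) (by linarith : s ≤ s + 1)
    (fun τ hτ => hx τ (hsub τ hτ))
    (fun τ hτ => hxd τ (Set.Ioo_subset_Icc_self hτ)
      (by linarith [hxlow τ (Set.Ioo_subset_Icc_self hτ)]))
  have hub := (hreg (s+1) (hsub (s+1) ⟨by linarith, le_rfl⟩)).2.1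
  nlinarith [hmv]

/-- Backward invariance: once `y ≥ 1 - 2δ` at time `t₁`, then `y ≥ 1 - 3δ` for all `σ ≤ t₁`. -/
lemma lemC (x y e₁ e₂ : ℝ → ℝ) (δ T : ℝ) (hδ : 0 < δ) (hδ6 : δ ≤ 1/6)
    (hy : ∀ σ ≤ T, HasDerivAt y (2 * x σ * y σ - 2 * y σ + e₂ σ) σ)
    (hreg : ∀ σ ≤ T, |e₂ σ| ≤ δ/48)
    (hB : ∀ σ ≤ T, y σ ≤ 1 - 2*δ → x σ ≤ 1 - δ/24)
    (t₁ : ℝ) (ht₁ : t₁ ≤ T) (hyt₁ : 1 - 2*δ ≤ y t₁) :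
    ∀ s ≤ t₁, 1 - 3*δ ≤ y s := by
  intro s hs
  by_contra hcon
  push_neg at hcon
  have hband : ∀ τ ∈ Set.Icc s t₁, 1 - 3*δ ≤ y τ → y τ ≤ 1 - 3*δ + δ →
      2 * x τ * y τ - 2 * y τ + e₂ τ ≤ 0 := by
    intro τ hτ h1 h2
    have hτT : τ ≤ T := hτ.2.trans ht₁
    have hxτ : x τ ≤ 1 - δ/24 := hB τ hτT (by linarith)
    have he : e₂ τ ≤ δ/48 := (abs_le.mp (hreg τ hτT)).2
    nlinarith [mul_nonneg (by linarith : (0:ℝ) ≤ y τ - 1/2)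
      (by linarith : (0:ℝ) ≤ 1 - δ/24 - x τ)]
  have := barrier_le (f := y) (f' := fun τ => 2 * x τ * y τ - 2 * y τ + e₂ τ)
    (c := 1 - 3*δ) (γ := δ) hs hδ
    (fun τ hτ => hy τ (hτ.2.trans ht₁)) hcon.le
    (fun τ hτ h1 h2 => by
      have := hband τ hτ h1 (by linarith)
      show 2 * x τ * y τ - 2 * y τ + e₂ τ ≤ 0
      linarith)
  linarith

/-- If `y` is eventually ≥ `1 - ρ/8`, then `x` is eventually ≥ `1 - ρ`. -/
lemma lemD (x y e₁ e₂ : ℝ → ℝ) (ρ T : ℝ) (hρ : 0 < ρ) (hρ2 : ρ ≤ 1/2)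
    (hx : ∀ σ ≤ T, HasDerivAt x (2 * x σ ^ 2 - x σ - y σ + e₁ σ) σ)
    (hreg : ∀ σ ≤ T, 1/2 - ρ/8 ≤ x σ ∧ x σ ≤ 1 + ρ/8 ∧ |e₁ σ| ≤ ρ/8)
    (hyh : ∀ σ ≤ T, 1 - ρ/8 ≤ y σ) :
    ∀ s ≤ T - 4/ρ, 1 - ρ ≤ x s := by
  intro s hs
  by_contra hxs
  push_neg at hxs
  have hb : s + 4/ρ ≤ T := by
    have h4 : (0:ℝ) < 4/ρ := by positivity
    linarith
  have hsab : s ≤ s + 4/ρ := by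
    have h4 : (0:ℝ) < 4/ρ := by positivity
    linarith
  have hsub : ∀ σ ∈ Set.Icc s (s + 4/ρ), σ ≤ T := fun σ hσ => hσ.2.trans hb
  have hxd : ∀ τ, τ ≤ T → x τ ≤ 1 - ρ/2 →
      2 * x τ ^ 2 - x τ - y τ + e₁ τ ≤ -(ρ/4) := by
    intro τ hτ hxτ
    obtain ⟨h1, h2, h3⟩ := hreg τ hτ
    have h3' : e₁ τ ≤ ρ/8 := (abs_le.mp h3).2
    have h4 := hyh τ hτ
    nlinarith [mul_nonneg (by linarith : (0:ℝ) ≤ 1 - ρ/2 - x τ)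
      (by linarith : (0:ℝ) ≤ 2 * x τ + 1 - ρ)]
  have hxup : ∀ σ ∈ Set.Icc s (s + 4/ρ), x σ ≤ 1 - ρ := by
    intro σ hσ
    refine barrier_le (f := x) (f' := fun τ => 2 * x τ ^ 2 - x τ - y τ + e₁ τ)
      (c := 1 - ρ) (γ := ρ/2) hσ.1 (by positivity)
      (fun τ hτ => hx τ (hsub τ ⟨hτ.1, hτ.2.trans hσ.2⟩)) hxs.le ?_
    intro τ hτ h1 h2
    have := hxd τ (hsub τ ⟨hτ.1, hτ.2.trans hσ.2⟩) (by linarith)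
    show 2 * x τ ^ 2 - x τ - y τ + e₁ τ ≤ 0
    linarith
  have hmv := mvt_le (f := x) (f' := fun τ => 2 * x τ ^ 2 - x τ - y τ + e₁ τ)
    (M := -(ρ/4)) hsab
    (fun τ hτ => hx τ (hsub τ hτ))
    (fun τ hτ => hxd τ (hsub τ (Set.Ioo_subset_Icc_self hτ))
      (by linarith [hxup τ (Set.Ioo_subset_Icc_self hτ)]))
  have hlb := (hreg (s + 4/ρ) hb).1
  have hkey : -(ρ/4) * (s + 4/ρ - s) = -1 := by
    field_simp
    ring
  rw [hkey] at hmv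
  linarith

/-- Decay of `y`: if `x` is eventually ≤ `1 - η` then `y` is eventually ≤ `κ`. -/
lemma lemE (x y e₁ e₂ : ℝ → ℝ) (η κ T : ℝ) (hη : 0 < η) (hη2 : η ≤ 1/2)
    (hκ : 0 < κ) (hκ1 : κ ≤ 1)
    (hy : ∀ σ ≤ T, HasDerivAt y (2 * x σ * y σ - 2 * y σ + e₂ σ) σ)
    (hreg : ∀ σ ≤ T, y σ ≤ 2 ∧ |e₂ σ| ≤ η*κ/2)
    (hxlow : ∀ σ ≤ T, x σ ≤ 1 - η) :
    ∀ s ≤ T, y s ≤ κ := by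
  intro s hs
  have hpos : (0:ℝ) < 4/(η*κ) := by positivity
  have hab : s - 4/(η*κ) ≤ s := by linarith
  have hsub : ∀ σ ∈ Set.Icc (s - 4/(η*κ)) s, σ ≤ T := fun σ hσ => hσ.2.trans hs
  have hdec : ∀ τ ∈ Set.Icc (s - 4/(η*κ)) s, κ/2 ≤ y τ →
      2 * x τ * y τ - 2 * y τ + e₂ τ ≤ -(η*κ/2) := by
    intro τ hτ hyτ
    have hτT := hsub τ hτ
    obtain ⟨h1, h2⟩ := hreg τ hτT
    have h2' : e₂ τ ≤ η*κ/2 := (abs_le.mp h2).2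
    have h3 := hxlow τ hτT
    nlinarith [mul_nonneg (by linarith : (0:ℝ) ≤ y τ - κ/2)
      (by linarith : (0:ℝ) ≤ 1 - η - x τ)]
  have := decay_le (f := y) (f' := fun τ => 2 * x τ * y τ - 2 * y τ + e₂ τ)
    (c := κ/2) (M := 2) (m := η*κ/2) hab (by positivity)
    (fun τ hτ => hy τ (hsub τ hτ))
    ((hreg _ (hsub _ ⟨le_rfl, hab⟩)).1)
    (by
      have : η*κ/2 * (s - (s - 4/(η*κ))) = 2 := by
        field_simp
        ring
      rw [this]
      linarith)
    hdec
  linarith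

/-- If `y` is eventually ≤ `ρ/8`, then `x` is eventually ≤ `1/2 + ρ`. -/
lemma lemF (x y e₁ e₂ : ℝ → ℝ) (ρ T : ℝ) (hρ : 0 < ρ) (hρ2 : ρ ≤ 1/2)
    (hx : ∀ σ ≤ T, HasDerivAt x (2 * x σ ^ 2 - x σ - y σ + e₁ σ) σ)
    (hreg : ∀ σ ≤ T, 1/2 - ρ/8 ≤ x σ ∧ x σ ≤ 1 + ρ/8 ∧ |e₁ σ| ≤ ρ/8)
    (hyl : ∀ σ ≤ T, y σ ≤ ρ/8) :
    ∀ s ≤ T - 8/ρ, x s ≤ 1/2 + ρ := by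
  intro s hs
  by_contra hxs
  push_neg at hxs
  have h8 : (0:ℝ) < 8/ρ := by positivity
  have hb : s + 8/ρ ≤ T := by linarith
  have hsab : s ≤ s + 8/ρ := by linarith
  have hsub : ∀ σ ∈ Set.Icc s (s + 8/ρ), σ ≤ T := fun σ hσ => hσ.2.trans hb
  have hxd : ∀ τ, τ ≤ T → 1/2 + ρ/2 ≤ x τ →
      ρ/4 ≤ 2 * x τ ^ 2 - x τ - y τ + e₁ τ := by
    intro τ hτ hxτ
    obtain ⟨h1, h2, h3⟩ := hreg τ hτ
    have h3' : -(ρ/8) ≤ e₁ τ := (abs_le.mp h3).1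
    have h4 := hyl τ hτ
    nlinarith [mul_nonneg (by linarith : (0:ℝ) ≤ x τ - (1/2 + ρ/2))
      (by linarith : (0:ℝ) ≤ 2 * x τ + ρ)]
  have hxlow : ∀ σ ∈ Set.Icc s (s + 8/ρ), 1/2 + ρ ≤ x σ := by
    intro σ hσ
    refine barrier_ge (f := x) (f' := fun τ => 2 * x τ ^ 2 - x τ - y τ + e₁ τ)
      (c := 1/2 + ρ) (γ := ρ/2) hσ.1 (by positivity)
      (fun τ hτ => hx τ (hsub τ ⟨hτ.1, hτ.2.trans hσ.2⟩)) hxs.le ?_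
    intro τ hτ h1 h2
    have := hxd τ (hsub τ ⟨hτ.1, hτ.2.trans hσ.2⟩) (by linarith)
    show (0:ℝ) ≤ 2 * x τ ^ 2 - x τ - y τ + e₁ τ
    linarith
  have hmv := mvt_ge (f := x) (f' := fun τ => 2 * x τ ^ 2 - x τ - y τ + e₁ τ)
    (m := ρ/4) hsab
    (fun τ hτ => hx τ (hsub τ hτ))
    (fun τ hτ => hxd τ (hsub τ (Set.Ioo_subset_Icc_self hτ))
      (by linarith [hxlow τ (Set.Ioo_subset_Icc_self hτ)]))
  have hub := (hreg (s + 8/ρ) hb).2.1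
  have hkey : ρ/4 * (s + 8/ρ - s) = 2 := by
    field_simp
    ring
  rw [hkey] at hmv
  linarith

theorem dynamical_dichotomy (σ₀ : ℝ) (x y e₁ e₂ : ℝ → ℝ)
    (hx : ∀ σ ≤ σ₀, HasDerivAt x (2 * x σ ^ 2 - x σ - y σ + e₁ σ) σ)
    (hy : ∀ σ ≤ σ₀, HasDerivAt y (2 * x σ * y σ - 2 * y σ + e₂ σ) σ)
    (he₁ : Tendsto e₁ atBot (nhds 0))
    (he₂ : Tendsto e₂ atBot (nhds 0))
    (hbounds : ∀ ε > (0 : ℝ), ∃ T, ∀ σ ≤ T,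
      1 / 2 - ε ≤ x σ ∧ x σ ≤ 1 + ε ∧ -ε ≤ y σ ∧ y σ ≤ 1 + ε) :
    Tendsto (fun σ => (x σ, y σ)) atBot (nhds ((1 / 2 : ℝ), (0 : ℝ))) ∨
    Tendsto (fun σ => (x σ, y σ)) atBot (nhds ((1 : ℝ), (1 : ℝ))) := by
  -- combined regional bounds
  have key : ∀ ε : ℝ, 0 < ε → ∃ T, T ≤ σ₀ ∧ ∀ σ ≤ T,
      1/2 - ε ≤ x σ ∧ x σ ≤ 1 + ε ∧ -ε ≤ y σ ∧ y σ ≤ 1 + ε ∧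
      |e₁ σ| ≤ ε ∧ |e₂ σ| ≤ ε := by
    intro ε hε
    obtain ⟨T₁, hT₁⟩ := hbounds ε hε
    have h1 := Metric.tendsto_nhds.mp he₁ ε hε
    have h2 := Metric.tendsto_nhds.mp he₂ ε hε
    rw [eventually_atBot] at h1 h2
    obtain ⟨T₂, hT₂⟩ := h1
    obtain ⟨T₃, hT₃⟩ := h2
    refine ⟨min σ₀ (min T₁ (min T₂ T₃)), min_le_left _ _, fun σ hσ => ?_⟩
    have hσ1 : σ ≤ T₁ := hσ.trans ((min_le_right _ _).trans (min_le_left _ _))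
    have hσ2 : σ ≤ T₂ :=
      hσ.trans ((min_le_right _ _).trans ((min_le_right _ _).trans (min_le_left _ _)))
    have hσ3 : σ ≤ T₃ :=
      hσ.trans ((min_le_right _ _).trans ((min_le_right _ _).trans (min_le_right _ _)))
    obtain ⟨b1, b2, b3, b4⟩ := hT₁ σ hσ1
    have e1b := hT₂ σ hσ2
    have e2b := hT₃ σ hσ3
    rw [Real.dist_eq, sub_zero] at e1b
    rw [Real.dist_eq, sub_zero] at e2b
    exact ⟨b1, b2, b3, b4, e1b.le, e2b.le⟩
  -- convergence criterion
  have tends : ∀ (f : ℝ → ℝ) (L : ℝ),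
      (∀ ε : ℝ, 0 < ε → ∃ T, ∀ σ ≤ T, |f σ - L| ≤ ε) →
      Tendsto f atBot (nhds L) := by
    intro f L h
    rw [Metric.tendsto_nhds]
    intro ε hε
    obtain ⟨T, hT⟩ := h (ε/2) (by linarith)
    rw [eventually_atBot]
    refine ⟨T, fun σ hσ => ?_⟩
    rw [Real.dist_eq]
    linarith [hT σ hσ]
  by_cases hcase : ∃ δ : ℝ, 0 < δ ∧ δ ≤ 1/6 ∧ ∃ Th, ∀ σ ≤ Th, y σ ≤ 1 - 2*δ
  · -- convergence to (1/2, 0)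
    obtain ⟨δ, hδ, hδ6, Th, hTh⟩ := hcase
    obtain ⟨T₀, hT₀, hreg⟩ := key (δ/24) (by positivity)
    have hBc := lemB x y e₁ e₂ δ T₀ hδ hδ6
      (fun σ hσ => hx σ (hσ.trans hT₀)) (fun σ hσ => hy σ (hσ.trans hT₀)) hreg
    have hη : (0:ℝ) < δ/24 := by positivity
    have hη2 : δ/24 ≤ 1/2 := by linarith
    -- x eventually below 1 - δ/24
    have hxlow : ∀ σ ≤ min (T₀ - 1) Th, x σ ≤ 1 - δ/24 := fun σ hσ =>
      hBc σ (hσ.trans (min_le_left _ _)) (hTh σ (hσ.trans (min_le_right _ _)))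
    -- y eventually small
    have hyto : ∀ κ : ℝ, 0 < κ → κ ≤ 1 → ∃ T, ∀ σ ≤ T, y σ ≤ κ ∧ -κ ≤ y σ := by
      intro κ hκ hκ1
      obtain ⟨T₁, hT₁σ, hreg₁⟩ := key ((δ/24)*κ/2) (by positivity)
      have hηκ : (δ/24)*κ ≤ 1 := by nlinarith
      have hκlow : (δ/24)*κ/2 ≤ κ := by nlinarith
      have hEc := lemE x y e₁ e₂ (δ/24) κ (min T₁ (min (T₀ - 1) Th)) hη hη2 hκ hκ1
        (fun σ hσ => hy σ ((hσ.trans (min_le_left _ _)).trans hT₁σ))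
        (fun σ hσ => by
          obtain ⟨_, _, _, h4, _, h6⟩ := hreg₁ σ (hσ.trans (min_le_left _ _))
          exact ⟨by linarith, h6⟩)
        (fun σ hσ => hxlow σ (hσ.trans (min_le_right _ _)))
      refine ⟨min T₁ (min (T₀ - 1) Th), fun σ hσ => ⟨hEc σ hσ, ?_⟩⟩
      have h3 := (hreg₁ σ (hσ.trans (min_le_left _ _))).2.2.1
      linarith
    have hy0 : Tendsto y atBot (nhds 0) := by
      refine tends y 0 (fun ε hε => ?_)
      obtain ⟨T, hT⟩ := hyto (min ε 1) (lt_min hε one_pos) (min_le_right _ _)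
      refine ⟨T, fun σ hσ => ?_⟩
      obtain ⟨ha, hb⟩ := hT σ hσ
      rw [sub_zero, abs_le]
      constructor
      · linarith [min_le_left ε (1:ℝ)]
      · linarith [min_le_left ε (1:ℝ)]
    have hx12 : Tendsto x atBot (nhds (1/2)) := by
      refine tends x (1/2) (fun ε hε => ?_)
      have hρ : (0:ℝ) < min ε (1/2) := lt_min hε (by norm_num)
      have hρ2 : min ε (1/2) ≤ 1/2 := min_le_right _ _
      set ρ := min ε (1/2) with hρdef
      obtain ⟨Ty, hTy⟩ := hyto (ρ/8) (by positivity) (by linarith)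
      obtain ⟨T₂, hT₂σ, hreg₂⟩ := key (ρ/8) (by positivity)
      have hFc := lemF x y e₁ e₂ ρ (min T₂ Ty) hρ hρ2
        (fun σ hσ => hx σ ((hσ.trans (min_le_left _ _)).trans hT₂σ))
        (fun σ hσ => by
          obtain ⟨h1, h2, _, _, h5, _⟩ := hreg₂ σ (hσ.trans (min_le_left _ _))
          exact ⟨h1, h2, h5⟩)
        (fun σ hσ => (hTy σ (hσ.trans (min_le_right _ _))).1)
      have h8 : (0:ℝ) < 8/ρ := by positivity
      refine ⟨min T₂ Ty - 8/ρ, fun σ hσ => ?_⟩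
      have h1 := hFc σ hσ
      have h2 := (hreg₂ σ (by
        have : σ ≤ min T₂ Ty := by linarith
        exact this.trans (min_le_left _ _))).1
      rw [abs_le]
      have hρε : ρ ≤ ε := min_le_left _ _
      constructor
      · linarith
      · linarith
    exact Or.inl (hx12.prodMk_nhds hy0)
  · -- convergence to (1, 1)
    push_neg at hcase
    have hyhigh : ∀ δ : ℝ, 0 < δ → δ ≤ 1/6 → ∃ T, T ≤ σ₀ ∧ ∀ σ ≤ T, 1 - 3*δ ≤ y σ := by
      intro δ hδ hδ6
      obtain ⟨Tb, hTbσ, hregb⟩ := key (δ/24) (by positivity)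
      obtain ⟨Tc, hTcσ, hregc⟩ := key (δ/48) (by positivity)
      have hBc := lemB x y e₁ e₂ δ Tb hδ hδ6
        (fun σ hσ => hx σ (hσ.trans hTbσ)) (fun σ hσ => hy σ (hσ.trans hTbσ)) hregb
      obtain ⟨t₁, ht₁, hyt₁⟩ := hcase δ hδ hδ6 (min (Tb - 1) Tc)
      have hCc := lemC x y e₁ e₂ δ (min (Tb - 1) Tc) hδ hδ6
        (fun σ hσ => hy σ ((hσ.trans (min_le_right _ _)).trans hTcσ))
        (fun σ hσ => (hregc σ (hσ.trans (min_le_right _ _))).2.2.2.2.2)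
        (fun σ hσ hyσ => hBc σ (hσ.trans (min_le_left _ _)) hyσ)
        t₁ ht₁ hyt₁.le
      exact ⟨t₁, (ht₁.trans (min_le_right _ _)).trans hTcσ, hCc⟩
    have hy1 : Tendsto y atBot (nhds 1) := by
      refine tends y 1 (fun ε hε => ?_)
      have hδ : (0:ℝ) < min (ε/8) (1/6) := lt_min (by linarith) (by norm_num)
      obtain ⟨T₁, _, hT₁⟩ := hyhigh (min (ε/8) (1/6)) hδ (min_le_right _ _)
      obtain ⟨T₂, _, hreg₂⟩ := key (min (ε/8) (1/6)) hδ
      refine ⟨min T₁ T₂, fun σ hσ => ?_⟩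
      have h1 := hT₁ σ (hσ.trans (min_le_left _ _))
      have h2 := (hreg₂ σ (hσ.trans (min_le_right _ _))).2.2.2.1
      have hm : min (ε/8) (1/6) ≤ ε/8 := min_le_left _ _
      rw [abs_le]
      constructor
      · linarith
      · linarith
    have hx1 : Tendsto x atBot (nhds 1) := by
      refine tends x 1 (fun ε hε => ?_)
      have hρ : (0:ℝ) < min ε (1/2) := lt_min hε (by norm_num)
      have hρ2 : min ε (1/2) ≤ 1/2 := min_le_right _ _
      set ρ := min ε (1/2) with hρdef
      obtain ⟨Ty, hTyσ, hTy⟩ := hyhigh (ρ/24) (by positivity) (by linarith)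
      obtain ⟨T₂, hT₂σ, hreg₂⟩ := key (ρ/8) (by positivity)
      have hDc := lemD x y e₁ e₂ ρ (min Ty T₂) hρ hρ2
        (fun σ hσ => hx σ ((hσ.trans (min_le_right _ _)).trans hT₂σ))
        (fun σ hσ => by
          obtain ⟨h1, h2, _, _, h5, _⟩ := hreg₂ σ (hσ.trans (min_le_right _ _))
          exact ⟨h1, h2, h5⟩)
        (fun σ hσ => by
          have := hTy σ (hσ.trans (min_le_left _ _))
          linarith)
      have h4 : (0:ℝ) < 4/ρ := by positivity
      refine ⟨min Ty T₂ - 4/ρ, fun σ hσ => ?_⟩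
      have h1 := hDc σ hσ
      have h2 := (hreg₂ σ (by
        have : σ ≤ min Ty T₂ := by linarith
        exact this.trans (min_le_right _ _))).2.1
      rw [abs_le]
      have hρε : ρ ≤ ε := min_le_left _ _
      constructor
      · linarith
      · linarith
    exact Or.inr (hx1.prodMk_nhds hy1)
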